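/- Let n > 2, λ₂, λ₃ > 0, and let ξ be a real random variable with density f(x) = λ₁ exp(−λ₂/xⁿ) 1_{(0,λ₃]}(x) where λ₁ normalizes f to integrate to 1. Then for every q > 0, E[exp(q/ξ²)] < ∞. -/

import Mathlib

/-! Substituting `t = 1/x`, the exponent `q/x² - l₂/xⁿ` of `exp(q/x²) · f(x)` becomes
`q t² - l₂ tⁿ`, which is bounded above on `t ≥ 0` because `n > 2` and `l₂ > 0`. Hence the
integrand `exp(q/ξ²)` is bounded against the density on the finite-measure support `(0, l₃]`. -/

open MeasureTheory Real

lemma exists_mul_pow_sub_mul_pow_le (a : ℝ) {b : ℝ} (hb : 0 < b) {k n : ℕ} (hkn : k < n) :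
    ∃ C, ∀ t : ℝ, 0 ≤ t → a * t ^ k - b * t ^ n ≤ C := by
  set T := max 1 (|a| / b)
  refine ⟨|a| * T ^ k, fun t ht => ?_⟩
  rcases le_total t T with htT | hTt
  · calc a * t ^ k - b * t ^ n ≤ |a| * t ^ k := by
          nlinarith [le_abs_self a, pow_nonneg ht k, pow_nonneg ht n]
      _ ≤ |a| * T ^ k := by gcongr
  · have h1 : 1 ≤ t := le_trans (le_max_left _ _) hTt
    have hab : |a| ≤ b * t := by
      rw [← div_le_iff₀' hb]; exact le_trans (le_max_right _ _) hTt
    have htn : t ^ (k + 1) ≤ t ^ n := pow_le_pow_right₀ h1 hkn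
    calc a * t ^ k - b * t ^ n ≤ |a| * t ^ k - b * t ^ (k + 1) := by
          nlinarith [le_abs_self a, pow_nonneg ht k]
      _ ≤ b * t * t ^ k - b * t ^ (k + 1) := by gcongr
      _ = 0 := by ring
      _ ≤ |a| * T ^ k := by positivity

lemma exists_div_pow_sub_div_pow_le (a : ℝ) {b : ℝ} (hb : 0 < b) {k n : ℕ} (hkn : k < n) :
    ∃ C, ∀ x : ℝ, 0 < x → a / x ^ k - b / x ^ n ≤ C := by
  obtain ⟨C, hC⟩ := exists_mul_pow_sub_mul_pow_le a hb hkn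
  refine ⟨C, fun x hx => ?_⟩
  simpa only [div_eq_mul_inv, inv_pow] using hC x⁻¹ (inv_nonneg.2 hx.le)

lemma integrable_withDensity_indicator_of_abs_mul_le {α : Type*} [MeasurableSpace α]
    {μ : Measure α} {s : Set α} (hs : MeasurableSet s) (hμs : μ s ≠ ⊤) {f g : α → ℝ}
    (hf : Measurable f) (hg : Measurable g) {C : ℝ} (hC : ∀ x ∈ s, |f x * g x| ≤ C) :
    Integrable g (μ.withDensity fun x => ENNReal.ofReal (s.indicator f x)) := by
  rw [integrable_withDensity_iff (hf.indicator hs).ennreal_ofReal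
    (ae_of_all _ fun _ => ENNReal.ofReal_lt_top)]
  have hsupp : (fun x => g x * (ENNReal.ofReal (s.indicator f x)).toReal) =
      s.indicator fun x => g x * max (f x) 0 := by
    ext x
    by_cases hx : x ∈ s <;> simp [hx, ENNReal.toReal_ofReal']
  rw [hsupp, integrable_indicator_iff hs]
  refine Measure.integrableOn_of_bounded (M := C) hμs (by fun_prop) ((ae_restrict_iff' hs).2 ?_)
  refine ae_of_all _ fun x hx => ?_
  have hmax : |max (f x) 0| ≤ |f x| := by
    rw [abs_of_nonneg (le_max_right _ _)]
    exact max_le (le_abs_self _) (abs_nonneg _)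
  calc ‖g x * max (f x) 0‖ ≤ |f x * g x| := by
        rw [norm_mul, abs_mul, mul_comm |f x|, norm_eq_abs, norm_eq_abs]
        exact mul_le_mul_of_nonneg_left hmax (abs_nonneg _)
    _ ≤ C := hC x hx

theorem integrable_exp_inv_sq_of_density_general
    {Ω : Type*} [MeasurableSpace Ω] (P : Measure Ω)
    (ξ : Ω → ℝ) (hmeas : Measurable ξ)
    (n : ℕ) (hn : 2 < n) (l1 l2 l3 : ℝ) (hl2 : 0 < l2)
    (hlaw : Measure.map ξ P =
      volume.withDensity (fun x =>
        ENNReal.ofReal (Set.indicator (Set.Ioc 0 l3) (fun y => l1 * Real.exp (-l2 / y ^ n)) x)))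
    (q : ℝ) :
    Integrable (fun ω => Real.exp (q / (ξ ω) ^ 2)) P := by
  obtain ⟨C, hC⟩ := exists_div_pow_sub_div_pow_le q hl2 hn
  have hg : Measurable fun x : ℝ => exp (q / x ^ 2) := by fun_prop
  rw [← Function.comp_def (fun x => exp (q / x ^ 2)) ξ,
    ← integrable_map_measure hg.aestronglyMeasurable hmeas.aemeasurable, hlaw]
  refine integrable_withDensity_indicator_of_abs_mul_le measurableSet_Ioc measure_Ioc_lt_top.ne
    (by fun_prop) hg (C := |l1| * exp C) fun x hx => ?_
  calc |l1 * exp (-l2 / x ^ n) * exp (q / x ^ 2)| = |l1| * exp (q / x ^ 2 - l2 / x ^ n) := by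
        rw [abs_mul, abs_mul, abs_of_pos (exp_pos _), abs_of_pos (exp_pos _), mul_assoc,
          ← exp_add, neg_div, neg_add_eq_sub]
    _ ≤ |l1| * exp C := by gcongr; exact hC x hx.1

theorem integrable_exp_inv_sq_of_density
    {Ω : Type*} [MeasurableSpace Ω] (P : Measure Ω) [IsProbabilityMeasure P]
    (ξ : Ω → ℝ) (hmeas : Measurable ξ)
    (n : ℕ) (hn : 2 < n) (l1 l2 l3 : ℝ) (hl2 : 0 < l2) (hl3 : 0 < l3)
    (hnorm : l1 * ∫ x in Set.Ioc 0 l3, Real.exp (-l2 / x ^ n) = 1)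
    (hlaw : Measure.map ξ P =
      volume.withDensity (fun x =>
        ENNReal.ofReal (Set.indicator (Set.Ioc 0 l3) (fun y => l1 * Real.exp (-l2 / y ^ n)) x)))
    (q : ℝ) (hq : 0 < q) :
    Integrable (fun ω => Real.exp (q / (ξ ω) ^ 2)) P :=
  integrable_exp_inv_sq_of_density_general P ξ hmeas n hn l1 l2 l3 hl2 hlaw q
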